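/- arXiv:1407.1573 — 6 statements merged into one kernel-verified Lean document; each statement's English description precedes it below -/
import Mathlib

section
/- Let k ⊆ L be fields with k algebraically closed of characteristic 0. Let d ≥ 2 and let f(X) = X^d + a_{d−2}X^{d−2} + ⋯ + a_1 X + a_0 ∈ L[X] be a monic polynomial of degree d in normal form. Suppose b₁, b₀ ∈ L with b₁ ≠ 0 are such that the conjugated polynomial g(X) = b₁^{−1}·(f(b₁X + b₀) − b₀) has all of its coefficients in k. Then b₁ ∈ k, b₀ ∈ k, and all coefficients of f lie in k. (The core of Lemma 5.2 of the paper: a polynomial in normal form is isotrivial if and only if it has constant coefficients; the paper's proof reduces isotriviality to conjugation by an affine map σ(z) = b₁z + b₀.) -/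
/-!
The leading coefficient of `g = σ⁻¹ ∘ f ∘ σ` is `b₁ ^ (d - 1)`, so `b₁` is algebraic over `k` and
hence lies in `k`. Because `f` has no `X ^ (d - 1)` term, the next coefficient of `g` is
`d * b₁ ^ (d - 2) * b₀`, which puts `b₀` in `k` (here `d ≠ 0` in characteristic 0). Then
`f = σ ∘ g ∘ σ⁻¹` is a composition of polynomials over `k`.
-/

open Polynomial

theorem Subfield.mem_of_pow_mem_of_isAlgClosed {L : Type*} [Field L] {k : Subfield L}
    [IsAlgClosed k] {x : L} {n : ℕ} (hn : n ≠ 0) (hx : x ^ n ∈ k) : x ∈ k := by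
  have hint : IsIntegral k x :=
    .of_pow (Nat.pos_of_ne_zero hn) (isIntegral_algebraMap (x := (⟨x ^ n, hx⟩ : k)))
  obtain ⟨y, rfl⟩ := minpoly.degree_eq_one_iff.1 <|
    IsAlgClosed.degree_eq_one_of_irreducible k (minpoly.irreducible hint)
  exact y.2

namespace Polynomial

section CommRing

variable {R : Type*} [CommRing R]

theorem coeff_taylor_of_natDegree_le_succ {f : R[X]} {n : ℕ} (hf : f.natDegree ≤ n + 1)
    (b : R) : (taylor b f).coeff n = f.coeff n + (n + 1) * f.coeff (n + 1) * b := by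
  have hdeg : (hasseDeriv n f).natDegree < 2 :=
    (natDegree_hasseDeriv_le f n).trans_lt (by omega)
  rw [taylor_coeff, eval_eq_sum_range' hdeg]
  simp [Finset.sum_range_succ, hasseDeriv_coeff, add_comm 1 n]

theorem coeff_comp_C_mul_X_add_C (f : R[X]) (a b : R) (n : ℕ) :
    (f.comp (C a * X + C b)).coeff n = a ^ n * (taylor b f).coeff n := by
  rw [show C a * X + C b = (X + C b).comp (C a * X) by simp, ← comp_assoc, ← taylor_apply,
    comp_C_mul_X_coeff, mul_comm]

end CommRing

theorem comp_mem_lifts {R S : Type*} [CommSemiring R] [CommSemiring S] {φ : R →+* S}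
    {p q : S[X]} (hp : p ∈ lifts φ) (hq : q ∈ lifts φ) : p.comp q ∈ lifts φ := by
  obtain ⟨P, rfl⟩ := (mem_lifts p).1 hp
  obtain ⟨Q, rfl⟩ := (mem_lifts q).1 hq
  exact (mem_lifts _).2 ⟨P.comp Q, map_comp φ P Q⟩

theorem mem_lifts_subtype_iff {L : Type*} [Field L] {k : Subfield L} {p : L[X]} :
    p ∈ lifts k.subtype ↔ ∀ n, p.coeff n ∈ k := by
  simp [lifts_iff_coeff_lifts]

section AffineConj

variable {K : Type*} [Field K]

/-- The conjugate `σ⁻¹ ∘ f ∘ σ` of `f` by the affine map `σ(z) = a z + b`. -/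
noncomputable def affineConj (a b : K) (f : K[X]) : K[X] :=
  C a⁻¹ * (f.comp (C a * X + C b) - C b)

variable {a b : K} {f : K[X]}

theorem coeff_affineConj_succ (ha : a ≠ 0) (n : ℕ) :
    (affineConj a b f).coeff (n + 1) = a ^ n * (taylor b f).coeff (n + 1) := by
  rw [affineConj, coeff_C_mul, coeff_sub, coeff_C_succ, sub_zero, coeff_comp_C_mul_X_add_C,
    pow_succ', ← mul_assoc, ← mul_assoc, inv_mul_cancel₀ ha, one_mul]

theorem C_mul_affineConj_add_C_comp (ha : a ≠ 0) :
    (C a * affineConj a b f + C b).comp (C a⁻¹ * (X - C b)) = f := by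
  have hC : C a * C a⁻¹ = 1 := by rw [← C_mul, mul_inv_cancel₀ ha, C_1]
  have hσ : (C a * X + C b).comp (C a⁻¹ * (X - C b)) = X := by
    rw [add_comp, mul_comp, C_comp, C_comp, X_comp, ← mul_assoc, hC, one_mul, sub_add_cancel]
  rw [affineConj, ← mul_assoc, hC, one_mul, sub_add_cancel, comp_assoc, hσ, comp_X]

theorem coeff_mem_of_coeff_affineConj_mem {k : Subfield K} (ha : a ≠ 0)
    (hak : a ∈ k) (hbk : b ∈ k) (hg : ∀ n, (affineConj a b f).coeff n ∈ k) (n : ℕ) :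
    f.coeff n ∈ k := by
  have hC {s : K} (hs : s ∈ k) : C s ∈ lifts k.subtype := C'_mem_lifts ⟨⟨s, hs⟩, rfl⟩
  have hσinv : C a⁻¹ * (X - C b) ∈ lifts k.subtype := by
    rw [sub_eq_add_neg, ← C_neg]
    exact mul_mem (hC (k.inv_mem hak)) (add_mem (X_mem_lifts _) (hC (k.neg_mem hbk)))
  rw [← C_mul_affineConj_add_C_comp (b := b) (f := f) ha]
  exact mem_lifts_subtype_iff.1 (comp_mem_lifts
    (add_mem (mul_mem (hC hak) (mem_lifts_subtype_iff.2 hg)) (hC hbk)) hσinv) n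

end AffineConj

end Polynomial

/-- Core of Lemma 5.2: if a degree-`d` polynomial `f` in normal form over `L` becomes,
after conjugation by the affine map `σ(z) = b₁ z + b₀`, a polynomial with all coefficients
in an algebraically closed subfield `k` of characteristic 0, then `b₁, b₀ ∈ k` and all
coefficients of `f` lie in `k`. -/
theorem stmt_4 {L : Type*} [Field L] [CharZero L] (k : Subfield L)
    [IsAlgClosed ↥k] (d : ℕ) (hd : 2 ≤ d) (f : Polynomial L)
    (hmonic : f.Monic) (hdeg : f.natDegree = d) (hnormal : f.coeff (d - 1) = 0)
    (b₁ b₀ : L) (hb₁ : b₁ ≠ 0)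
    (hg : ∀ n : ℕ,
      (Polynomial.C b₁⁻¹ * (f.comp (Polynomial.C b₁ * Polynomial.X + Polynomial.C b₀)
        - Polynomial.C b₀)).coeff n ∈ k) :
    b₁ ∈ k ∧ b₀ ∈ k ∧ ∀ n : ℕ, f.coeff n ∈ k := by
  change ∀ n, (affineConj b₁ b₀ f).coeff n ∈ k at hg
  obtain ⟨m, rfl⟩ : ∃ m, d = m + 2 := ⟨d - 2, by omega⟩
  have htop : (taylor b₀ f).coeff (m + 2) = 1 := by
    rw [← hdeg, coeff_taylor_natDegree, hmonic.leadingCoeff]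
  have hnext : (taylor b₀ f).coeff (m + 1) = (m + 2) * b₀ := by
    rw [coeff_taylor_of_natDegree_le_succ hdeg.le, show f.coeff (m + 1) = 0 from hnormal,
      show m + 1 + 1 = f.natDegree by omega, coeff_natDegree, hmonic.leadingCoeff]
    push_cast; ring
  have hb₁k : b₁ ∈ k := k.mem_of_pow_mem_of_isAlgClosed (n := m + 1) (by omega) <| by
    simpa [coeff_affineConj_succ hb₁, htop] using hg (m + 2)
  have hb₀k : b₀ ∈ k := by
    have hm : (m + 2 : L) ≠ 0 := by norm_cast
    have hb₀ : b₀ = (b₁ ^ m * (m + 2))⁻¹ * (affineConj b₁ b₀ f).coeff (m + 1) := by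
      rw [coeff_affineConj_succ hb₁, hnext]; field_simp
    rw [hb₀]
    exact k.mul_mem (k.inv_mem (k.mul_mem (k.pow_mem hb₁k m)
      (by exact_mod_cast natCast_mem k (m + 2)))) (hg (m + 1))
  exact ⟨hb₁k, hb₀k, coeff_mem_of_coeff_affineConj_mem hb₁ hb₁k hb₀k hg⟩
end

section
/- Let k be an algebraically closed field of characteristic 0 and let f ∈ k[X] be a polynomial of degree d ≥ 2. Then there exist β, ζ ∈ k such that f(β) = β, f(ζ) = β, and ζ is not a periodic point of the map x ↦ f(x). (The case n = 1 of Lemma 4.3 of the paper, for polynomial maps: every polynomial of degree at least 2 has a fixed point admitting a non-periodic preimage.) -/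
open Polynomial

private lemma aux_notper {k : Type*} [Field k] (f : Polynomial k) (β ζ : k)
    (hβ : f.eval β = β) (hζ : f.eval ζ = β) (hne : ζ ≠ β) :
    ¬ ∃ n : ℕ, 1 ≤ n ∧ (fun x => f.eval x)^[n] ζ = ζ := by
  rintro ⟨n, hn, hiter⟩
  have hfix : ∀ m : ℕ, (fun x => f.eval x)^[m] β = β := by
    intro m
    induction m with
    | zero => simp
    | succ m ih => rw [Function.iterate_succ_apply, hβ, ih]
  obtain ⟨m, rfl⟩ := Nat.exists_eq_add_of_le hn
  rw [Nat.add_comm, Function.iterate_add_apply] at hiter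
  simp only [Function.iterate_one, hζ] at hiter
  rw [hfix m] at hiter
  exact hne hiter.symm

/-- Case `n = 1` of Lemma 4.3 for polynomial maps: every polynomial of degree at least 2
over an algebraically closed field of characteristic 0 has a fixed point admitting a
non-periodic preimage. -/
theorem stmt_7 {k : Type*} [Field k] [IsAlgClosed k] [CharZero k]
    (d : ℕ) (hd : 2 ≤ d) (f : Polynomial k) (hdeg : f.natDegree = d) :
    ∃ β ζ : k, f.eval β = β ∧ f.eval ζ = β ∧
      ¬ ∃ n : ℕ, 1 ≤ n ∧ (fun x => f.eval x)^[n] ζ = ζ := by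
  -- find a fixed point β
  have hX : (X : Polynomial k).natDegree < f.natDegree := by
    rw [hdeg, natDegree_X]; omega
  have hgd : (f - X).natDegree = d := by
    rw [natDegree_sub_eq_left_of_natDegree_lt hX, hdeg]
  have hg0 : f - X ≠ 0 := fun h => by simp [h] at hgd; omega
  have hgdeg : (f - X).degree ≠ 0 := by
    rw [degree_eq_natDegree hg0, hgd]; exact_mod_cast (by omega : (d : ℤ) ≠ 0)
  obtain ⟨β, hβroot⟩ := IsAlgClosed.exists_root (f - X) hgdeg
  have hβ : f.eval β = β := by
    have := hβroot
    rw [IsRoot.def, eval_sub, eval_X, sub_eq_zero] at this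
    exact this
  by_cases hc : ∃ ζ : k, f.eval ζ = β ∧ ζ ≠ β
  · obtain ⟨ζ, hζ, hne⟩ := hc
    exact ⟨β, ζ, hβ, hζ, aux_notper f β ζ hβ hζ hne⟩
  push_neg at hc
  -- all preimages of β equal β : f - C β = c (X - β)^d
  set h : Polynomial k := f - C β with hh
  have hhd : h.natDegree = d := by
    rw [hh, natDegree_sub_eq_left_of_natDegree_lt (by rw [natDegree_C, hdeg]; omega), hdeg]
  have hh0 : h ≠ 0 := fun h0 => by simp [h0] at hhd; omega
  have hcard : h.roots.card = h.natDegree :=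
    splits_iff_card_roots.mp (IsAlgClosed.splits h)
  have hroots : h.roots = Multiset.replicate d β := by
    apply Multiset.eq_replicate.mpr
    refine ⟨by rw [hcard, hhd], fun b hb => ?_⟩
    have := isRoot_of_mem_roots hb
    rw [IsRoot.def, hh, eval_sub, eval_C, sub_eq_zero] at this
    exact hc b this
  set c : k := h.leadingCoeff with hcdef
  have hc0 : c ≠ 0 := leadingCoeff_ne_zero.mpr hh0
  have hfac : C c * (X - C β) ^ d = h := by
    have := C_leadingCoeff_mul_prod_multiset_X_sub_C (p := h) (by rw [hcard])
    rw [hroots] at this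
    simpa [Multiset.map_replicate, Multiset.prod_replicate] using this
  have heval : ∀ x : k, f.eval x = c * (x - β) ^ d + β := by
    intro x
    have : h.eval x = c * (x - β) ^ d := by
      rw [← hfac]; simp
    rw [hh, eval_sub, eval_C] at this
    linear_combination this
  -- find y with c * y^(d-1) = 1
  have hq0 : (C c * X ^ (d - 1) - 1 : Polynomial k).degree ≠ 0 := by
    have h1 : (C c * X ^ (d - 1) : Polynomial k).natDegree = d - 1 := by
      rw [natDegree_C_mul hc0, natDegree_X_pow]
    have h2 : ((1 : Polynomial k)).natDegree < (C c * X ^ (d - 1) : Polynomial k).natDegree := by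
      rw [natDegree_one, h1]; omega
    have h3 : (C c * X ^ (d - 1) - 1 : Polynomial k).natDegree = d - 1 := by
      rw [natDegree_sub_eq_left_of_natDegree_lt h2, h1]
    have h4 : (C c * X ^ (d - 1) - 1 : Polynomial k) ≠ 0 := fun h0 => by
      simp [h0] at h3; omega
    rw [degree_eq_natDegree h4, h3]
    exact_mod_cast (by omega : d - 1 ≠ 0)
  obtain ⟨y, hy⟩ := IsAlgClosed.exists_root _ hq0
  have hy1 : c * y ^ (d - 1) = 1 := by
    have := hy
    rw [IsRoot.def, eval_sub, eval_mul, eval_C, eval_pow, eval_X, eval_one, sub_eq_zero] at this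
    exact this
  have hy0 : y ≠ 0 := by
    rintro rfl
    rw [zero_pow (by omega : d - 1 ≠ 0), mul_zero] at hy1
    exact zero_ne_one hy1
  set β' : k := β + y with hβ'
  have hβ'fix : f.eval β' = β' := by
    rw [heval, hβ']
    have : c * y ^ d = y := by
      calc c * y ^ d = c * y ^ (d - 1) * y := by
            rw [mul_assoc, ← pow_succ]
            congr 2
            omega
        _ = y := by rw [hy1, one_mul]
    simp [this, add_comm y β]
  -- find ζ : (ζ - β)^d = y / c with ζ ≠ β'
  set a : k := y / c with hadef
  have ha0 : a ≠ 0 := div_ne_zero hy0 hc0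
  set p : Polynomial k := X ^ d - C a with hp
  have hpsep : p.Separable := separable_X_pow_sub_C a (by exact_mod_cast (by omega : d ≠ 0)) ha0
  have hpmonic : p.Monic := monic_X_pow_sub_C a (by omega)
  have hpd : p.natDegree = d := by
    rw [hp, natDegree_X_pow_sub_C]
  have hpcard : p.roots.card = d := by
    rw [← hpd]
    exact (splits_iff_card_roots.mp (IsAlgClosed.splits p)).symm ▸
      splits_iff_card_roots.mp (IsAlgClosed.splits p)
  have hnodup : p.roots.Nodup := nodup_roots hpsep
  classical
  have hexw : ∃ w ∈ p.roots, w ≠ y := by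
    by_contra hall
    push_neg at hall
    have : p.roots = Multiset.replicate d y :=
      Multiset.eq_replicate.mpr ⟨hpcard, hall⟩
    have hcount := (Multiset.nodup_iff_count_le_one.mp hnodup) y
    rw [this, Multiset.count_replicate_self] at hcount
    omega
  obtain ⟨w, hwmem, hwy⟩ := hexw
  have hwroot : w ^ d = a := by
    have := isRoot_of_mem_roots hwmem
    rw [IsRoot.def, hp, eval_sub, eval_pow, eval_X, eval_C, sub_eq_zero] at this
    exact this
  refine ⟨β', β + w, hβ'fix, ?_, aux_notper f β' (β + w) hβ'fix ?_ ?_⟩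
  · rw [heval]
    simp [hwroot, hadef, mul_div_cancel₀ _ hc0, hβ', add_comm y β]  -- c * a = y
  · rw [heval]
    simp [hwroot, hadef, mul_div_cancel₀ _ hc0, hβ', add_comm y β]
  · rw [hβ']
    intro hE
    exact hwy (add_left_cancel hE)
end

section
/- Let k be an algebraically closed field of characteristic 0, let F ∈ k[X] be a squarefree polynomial of degree e ≥ 3, and let γ ∈ k[t] be a nonconstant polynomial. Then the composition F(γ(t)) has at least deg(γ) + 1 distinct roots in k. (The genus-0, integral-point case of Proposition 3.3 of the paper, which is deduced from the Mason–Stothers abc-theorem for function fields: the number of places at which F(γ) vanishes is at least the height of γ minus a constant, and here the constant vanishes since the roots of F are constants and the genus is 0.) -/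
/-!
Pick two distinct roots `α ≠ β` of `F` (there are `deg F ≥ 3` of them, `F` being squarefree over
an algebraically closed field). Mason–Stothers applied to
`(γ - α) + (β - γ) + (α - β) = 0` bounds `deg γ + 1` by the degree of the radical of
`(γ - α)(γ - β)`, which divides `F ∘ γ`; over an algebraically closed field the degree of the
radical of a polynomial is at most its number of distinct roots.
-/

open Polynomial UniqueFactorizationMonoid UniqueFactorizationDomain

namespace Polynomial

section

variable {k : Type*} [Field k] [DecidableEq k]

theorem dvd_pow_prod_roots_toFinset [IsAlgClosed k] {p : k[X]} (hp : p ≠ 0) :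
    p ∣ (∏ r ∈ p.roots.toFinset, (X - C r)) ^ p.natDegree := by
  rw [← Finset.prod_pow]
  conv_lhs => rw [(IsAlgClosed.splits p).eq_prod_roots, Finset.prod_multiset_map_count]
  refine (C_mul_dvd (leadingCoeff_ne_zero.mpr hp)).mpr <| Finset.prod_dvd_prod_of_dvd _ _
    fun r _ => pow_dvd_pow _ ((Multiset.count_le_card r _).trans (card_roots' p))

theorem natDegree_radical_le_card_roots_toFinset [IsAlgClosed k] (p : k[X]) :
    (radical p).natDegree ≤ p.roots.toFinset.card := by
  rcases eq_or_ne p 0 with rfl | hp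
  · simp
  have hdvd : radical p ∣ ∏ r ∈ p.roots.toFinset, (X - C r) :=
    (exists_dvd_pow_iff_radical_dvd hp).mp ⟨_, dvd_pow_prod_roots_toFinset hp⟩
  calc (radical p).natDegree
      ≤ (∏ r ∈ p.roots.toFinset, (X - C r)).natDegree :=
        natDegree_le_of_dvd hdvd (Finset.prod_ne_zero_iff.mpr fun r _ => X_sub_C_ne_zero r)
    _ = p.roots.toFinset.card := by
      rw [natDegree_prod_of_monic _ _ fun r _ => monic_X_sub_C r]
      simp

theorem natDegree_add_one_le_natDegree_radical_sub_C_mul_sub_C [CharZero k]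
    {γ : k[X]} (hγ : 0 < γ.natDegree) {α β : k} (hαβ : α ≠ β) :
    γ.natDegree + 1 ≤ (radical ((γ - C α) * (γ - C β))).natDegree := by
  have hne : ∀ c : k, γ - C c ≠ 0 := fun c h => by
    have := natDegree_sub_C (p := γ) (a := c)
    rw [h, natDegree_zero] at this
    omega
  have hsum : (γ - C α) + (C β - γ) + C (α - β) = 0 := by rw [C_sub]; ring
  -- `(γ - C α) + (C β - γ)` is the nonzero constant `β - α`
  have hcop : IsCoprime (γ - C α) (C β - γ) := by
    refine ⟨C (β - α)⁻¹, C (β - α)⁻¹, ?_⟩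
    rw [← mul_add, sub_add_sub_cancel', ← C_sub, ← C_mul,
      inv_mul_cancel₀ (sub_ne_zero.mpr hαβ.symm), C_1]
  have hrad : radical ((γ - C α) * (C β - γ) * C (α - β)) =
      radical ((γ - C α) * (γ - C β)) := by
    rw [radical_mul_of_isUnit_right (isUnit_C.mpr (sub_ne_zero.mpr hαβ).isUnit), ← neg_sub γ,
      mul_neg, radical_neg]
  rcases Polynomial.abc (hne α) (by rw [← neg_sub]; exact neg_ne_zero.mpr (hne β))
      (C_ne_zero.mpr (sub_ne_zero.mpr hαβ)) hcop hsum with ⟨h, -, -⟩ | ⟨h, -, -⟩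
  · rwa [natDegree_sub_C, hrad] at h
  · rw [derivative_sub, derivative_C, sub_zero, derivative_eq_zero] at h
    omega

end

theorem sub_C_mul_sub_C_dvd_comp {R : Type*} [CommRing R] {F : R[X]} (γ : R[X]) {α β : R}
    (hαβ : IsUnit (α - β)) (hα : F.IsRoot α) (hβ : F.IsRoot β) :
    (γ - C α) * (γ - C β) ∣ F.comp γ := by
  have h : (X - C α) * (X - C β) ∣ F := (isCoprime_X_sub_C_of_isUnit_sub hαβ).mul_dvd
    (dvd_iff_isRoot.mpr hα) (dvd_iff_isRoot.mpr hβ)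
  simpa using _root_.map_dvd (compRingHom γ) h

end Polynomial

theorem Squarefree.card_roots_toFinset_eq_natDegree {k : Type*} [Field k] [DecidableEq k]
    [IsAlgClosed k] {p : k[X]} (hp : Squarefree p) : p.roots.toFinset.card = p.natDegree := by
  rw [Multiset.toFinset_card_of_nodup (nodup_roots (PerfectField.separable_iff_squarefree.mpr hp)),
    splits_iff_card_roots.mp (IsAlgClosed.splits p)]

/-- Genus-0, integral-point case of Proposition 3.3 (via Mason–Stothers): if `F` is
squarefree of degree `e ≥ 3` over an algebraically closed field of characteristic 0 and
`γ` is a nonconstant polynomial, then `F ∘ γ` has at least `deg γ + 1` distinct roots. -/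
theorem stmt_9 {k : Type*} [Field k] [IsAlgClosed k] [CharZero k]
    (F γ : Polynomial k) (hF : Squarefree F) (he : 3 ≤ F.natDegree)
    (hγ : 0 < γ.natDegree) :
    γ.natDegree + 1 ≤ {x : k | (F.comp γ).eval x = 0}.ncard := by
  classical
  obtain ⟨α, hα, β, hβ, hαβ⟩ := Finset.one_lt_card.mp
    (hF.card_roots_toFinset_eq_natDegree ▸ (by omega : 1 < F.natDegree))
  rw [Multiset.mem_toFinset, mem_roots hF.ne_zero] at hα hβ
  have hFγ : F.comp γ ≠ 0 := ne_zero_of_natDegree_gt (n := 0) <| by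
    rw [natDegree_comp]
    exact Nat.mul_pos (by omega) hγ
  have hzeros : {x : k | (F.comp γ).eval x = 0} = ↑(F.comp γ).roots.toFinset := by
    ext x
    simp [mem_roots hFγ]
  calc γ.natDegree + 1 ≤ (radical ((γ - C α) * (γ - C β))).natDegree :=
        natDegree_add_one_le_natDegree_radical_sub_C_mul_sub_C hγ hαβ
    _ ≤ (radical (F.comp γ)).natDegree := natDegree_le_of_dvd
        (radical_dvd_radical (sub_C_mul_sub_C_dvd_comp γ (sub_ne_zero.mpr hαβ).isUnit hα hβ) hFγ)
        radical_ne_zero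
    _ ≤ (F.comp γ).roots.toFinset.card := natDegree_radical_le_card_roots_toFinset _
    _ = {x : k | (F.comp γ).eval x = 0}.ncard := by rw [hzeros, Set.ncard_coe_finset]
end

section
/- Let K be a field equipped with a nonarchimedean absolute value |·| and let k ⊆ K be a subfield such that |c| = 1 for every nonzero c ∈ k. Let d ≥ 2 be an integer, let m be an integer with 0 ≤ m ≤ d − 2, and let f(X) = X^d + a_{d−2}X^{d−2} + ⋯ + a_1X + a_0 ∈ K[X] be such that a_i ∈ k for every i > m and |a_j| > 1 for some j ≤ m. Then at most m elements x ∈ k are preperiodic under the map x ↦ f(x). (The consequence of Lemma 5.3 of the paper that is used in the proofs of Theorems 2.1 and 2.2: at most m constants have bounded orbit, hence at most m constants can be preperiodic.) -/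
/-!
Let `B = max_{j ≤ m} |a_j| > 1`; the remaining coefficients lie in `k`, so all `|a_i| ≤ B`.
Then `|y| ≥ B` forces `|f y| = |y|^d > |y|`, so such a `y` escapes and is not preperiodic.
For a preperiodic `x ∈ k` write `f x = c + L(x)` with `c ∈ k` and `L = ∑_{j ≤ m} a_j X^j`;
if `|L(x)| ≥ B > |c|` then `|f x| ≥ B`, so `f x` (again preperiodic) would escape. Hence
`|L(x)| < B`. Given `m + 1` such points, Lagrange interpolation recovers `L` from its values
there, and the Lagrange basis has coefficients in `k`, so every `|a_j| < B`: a contradiction.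
-/

open Polynomial Finset

section Nonarchimedean

variable {K : Type*} [Field K] {v : AbsoluteValue K ℝ} {k : Subfield K}

lemma AbsoluteValue.le_one_of_mem (hk : ∀ c ∈ k, c ≠ 0 → v c = 1) {x : K} (hx : x ∈ k) :
    v x ≤ 1 := by
  rcases eq_or_ne x 0 with rfl | hx0
  · simp
  · exact (hk x hx hx0).le

lemma IsNonarchimedean.apply_sum_le_of_forall_le {ι : Type*} (hna : IsNonarchimedean v)
    {s : Finset ι} {F : ι → K} {t : ℝ} (ht : 0 ≤ t) (h : ∀ i ∈ s, v (F i) ≤ t) :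
    v (∑ i ∈ s, F i) ≤ t := by
  rcases s.eq_empty_or_nonempty with rfl | hs
  · simpa using ht
  · exact (hna.apply_sum_le_sup hs).trans (Finset.sup'_le hs _ h)

lemma Lagrange.coeff_basis_mem [DecidableEq K] {s : Finset K} (hs : (s : Set K) ⊆ k) {x : K}
    (hx : x ∈ s) (n : ℕ) : (Lagrange.basis s id x).coeff n ∈ k := by
  have hlifts : Lagrange.basis s id x ∈ liftsRing k.subtype := by
    have hC : ∀ c ∈ k, C c ∈ liftsRing k.subtype := fun c hc =>
      (lifts_iff_liftsRing k.subtype _).mp (C'_mem_lifts ⟨⟨c, hc⟩, rfl⟩)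
    have hX : X ∈ liftsRing k.subtype := (lifts_iff_liftsRing k.subtype _).mp (X_mem_lifts _)
    refine Subring.prod_mem _ fun y hy =>
      Subring.mul_mem _ (hC _ ?_) (Subring.sub_mem _ hX (hC _ ?_))
    · exact k.inv_mem (k.sub_mem (hs hx) (hs (mem_of_mem_erase hy)))
    · exact hs (mem_of_mem_erase hy)
  obtain ⟨c, hc⟩ := (lifts_iff_coeff_lifts _).mp ((lifts_iff_liftsRing k.subtype _).mpr hlifts) n
  exact hc ▸ c.2

theorem IsNonarchimedean.abv_coeff_le_of_abv_eval_le (hna : IsNonarchimedean v)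
    (hk : ∀ c ∈ k, c ≠ 0 → v c = 1) {p : K[X]} {s : Finset K} (hs : (s : Set K) ⊆ k)
    (hdeg : p.degree < #s) {t : ℝ} (ht : 0 ≤ t) (hp : ∀ x ∈ s, v (p.eval x) ≤ t) (n : ℕ) :
    v (p.coeff n) ≤ t := by
  classical
  rw [Lagrange.eq_interpolate (Set.injOn_id _) hdeg, Lagrange.interpolate_apply, finsetSum_coeff]
  refine hna.apply_sum_le_of_forall_le ht fun x hx => ?_
  rw [coeff_C_mul, map_mul]
  calc v (p.eval (id x)) * v ((Lagrange.basis s id x).coeff n) ≤ t * 1 :=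
        mul_le_mul (hp x hx) (v.le_one_of_mem hk (Lagrange.coeff_basis_mem hs hx n))
          (v.nonneg _) ht
    _ = t := mul_one t

end Nonarchimedean

namespace Function

variable {α : Type*} {f : α → α} {x : α}

def IsPreperiodicPt (f : α → α) (x : α) : Prop :=
  ∃ m n : ℕ, 1 ≤ n ∧ f^[m + n] x = f^[m] x

lemma IsPreperiodicPt.apply (hx : IsPreperiodicPt f x) : IsPreperiodicPt f (f x) := by
  obtain ⟨m, n, hn, hmn⟩ := hx
  refine ⟨m, n, hn, ?_⟩
  rw [← iterate_succ_apply, ← iterate_succ_apply, iterate_succ', iterate_succ', comp_apply,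
    comp_apply, hmn]

lemma not_isPreperiodicPt_of_lt_apply {β : Type*} [Preorder β] {φ : α → β} {S : Set α}
    (hS : ∀ y ∈ S, f y ∈ S ∧ φ y < φ (f y)) (hx : x ∈ S) : ¬ IsPreperiodicPt f x := by
  have hmem : ∀ n, f^[n] x ∈ S := by
    intro n
    induction n with
    | zero => exact hx
    | succ n ih => rw [iterate_succ_apply']; exact (hS _ ih).1
  have hmono : StrictMono fun n => φ (f^[n] x) := strictMono_nat_of_lt_succ fun n => by
    simp only [iterate_succ_apply']
    exact (hS _ (hmem n)).2
  rintro ⟨m, n, hn, hmn⟩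
  exact (hmono (by omega : m < m + n)).ne' (congrArg φ hmn)

end Function

open Function

section UnicriticalEscape

variable {K : Type*} [Field K] {v : AbsoluteValue K ℝ} {B : ℝ} {d : ℕ} {a : ℕ → K} {f : K → K}

lemma abv_apply_eq_pow_of_le_abv (hna : IsNonarchimedean v) (hB : 1 < B) (hd : 2 ≤ d)
    (ha : ∀ i < d - 1, v (a i) ≤ B)
    (hf : ∀ y, f y = y ^ d + ∑ i ∈ range (d - 1), a i * y ^ i) {y : K} (hy : B ≤ v y) :
    v (f y) = v y ^ d := by
  have hy1 : 1 < v y := hB.trans_le hy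
  have hsum : v (∑ i ∈ range (d - 1), a i * y ^ i) ≤ B * v y ^ (d - 2) := by
    refine hna.apply_sum_le_of_forall_le (by positivity) fun i hi => ?_
    rw [map_mul, map_pow]
    have hi' : i ≤ d - 2 := by have := mem_range.mp hi; omega
    exact mul_le_mul (ha i (mem_range.mp hi)) (pow_le_pow_right₀ hy1.le hi') (by positivity)
      (by positivity)
  have hlt : B * v y ^ (d - 2) < v (y ^ d) := by
    calc B * v y ^ (d - 2) ≤ v y * v y ^ (d - 2) := by gcongr
      _ = v y ^ (d - 1) := by rw [← pow_succ', show d - 2 + 1 = d - 1 by omega]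
      _ < v (y ^ d) := by rw [map_pow]; exact pow_lt_pow_right₀ hy1 (by omega)
  rw [hf, hna.add_eq_left_of_lt (hsum.trans_lt hlt), map_pow]

lemma not_isPreperiodicPt_of_le_abv (hna : IsNonarchimedean v) (hB : 1 < B) (hd : 2 ≤ d)
    (ha : ∀ i < d - 1, v (a i) ≤ B)
    (hf : ∀ y, f y = y ^ d + ∑ i ∈ range (d - 1), a i * y ^ i) {y : K} (hy : B ≤ v y) :
    ¬ IsPreperiodicPt f y := by
  refine not_isPreperiodicPt_of_lt_apply (φ := v) (S := {y | B ≤ v y}) (fun z hz => ?_) hy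
  have hz1 : 1 < v z := hB.trans_le hz
  have hlt : v z < v (f z) := by
    rw [abv_apply_eq_pow_of_le_abv hna hB hd ha hf hz]
    simpa using pow_lt_pow_right₀ hz1 (by omega : 1 < d)
  exact ⟨hz.trans hlt.le, hlt⟩

end UnicriticalEscape

section LowCoefficients

variable {K : Type*} [Field K] {v : AbsoluteValue K ℝ} {k : Subfield K} {B : ℝ} {d m : ℕ}
  {a : ℕ → K} {f : K → K}

lemma abv_sum_lt_of_isPreperiodicPt (hna : IsNonarchimedean v) (hk : ∀ c ∈ k, c ≠ 0 → v c = 1)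
    (hB : 1 < B) (hd : 2 ≤ d) (hm : m ≤ d - 2) (hak : ∀ i, m < i → i ≤ d - 2 → a i ∈ k)
    (ha : ∀ i < d - 1, v (a i) ≤ B)
    (hf : ∀ y, f y = y ^ d + ∑ i ∈ range (d - 1), a i * y ^ i) {x : K} (hxk : x ∈ k)
    (hx : IsPreperiodicPt f x) : v (∑ j ∈ range (m + 1), a j * x ^ j) < B := by
  by_contra! hge
  have hsplit : f x = (x ^ d + ∑ i ∈ Ico (m + 1) (d - 1), a i * x ^ i)
      + ∑ j ∈ range (m + 1), a j * x ^ j := by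
    rw [hf, ← sum_range_add_sum_Ico _ (by omega : m + 1 ≤ d - 1)]
    ring
  have hhigh : x ^ d + ∑ i ∈ Ico (m + 1) (d - 1), a i * x ^ i ∈ k := by
    refine k.add_mem (k.pow_mem hxk d) (k.sum_mem fun i hi => ?_)
    obtain ⟨hi₁, hi₂⟩ := mem_Ico.mp hi
    exact k.mul_mem (hak i (by omega) (by omega)) (k.pow_mem hxk i)
  have hfx : v (f x) = v (∑ j ∈ range (m + 1), a j * x ^ j) := by
    rw [hsplit]
    exact hna.add_eq_right_of_lt ((v.le_one_of_mem hk hhigh).trans_lt (hB.trans_le hge))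
  exact not_isPreperiodicPt_of_le_abv hna hB hd ha hf (hfx ▸ hge) hx.apply

lemma abv_coeff_lt_of_isPreperiodicPt (hna : IsNonarchimedean v)
    (hk : ∀ c ∈ k, c ≠ 0 → v c = 1) (hB : 1 < B) (hd : 2 ≤ d) (hm : m ≤ d - 2)
    (hak : ∀ i, m < i → i ≤ d - 2 → a i ∈ k) (ha : ∀ i < d - 1, v (a i) ≤ B)
    (hf : ∀ y, f y = y ^ d + ∑ i ∈ range (d - 1), a i * y ^ i) {S : Finset K}
    (hS : ∀ x ∈ S, x ∈ k ∧ IsPreperiodicPt f x) (hSm : m < #S) {j : ℕ} (hj : j ≤ m) :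
    v (a j) < B := by
  set L : K[X] := ∑ j ∈ range (m + 1), C (a j) * X ^ j with hL
  have hdeg : L.degree < #S := by
    refine lt_of_lt_of_le ?_ (Nat.cast_le.mpr hSm)
    rw [hL, ← Fin.sum_univ_eq_sum_range (fun j => C (a j) * X ^ j)]
    exact degree_sum_fin_lt _
  have heval : ∀ x, L.eval x = ∑ j ∈ range (m + 1), a j * x ^ j := by
    simp [hL, eval_finsetSum]
  have hcoeff : L.coeff j = a j := by
    simp [hL, finsetSum_coeff, Nat.lt_succ_of_le hj]
  obtain ⟨x₀, hx₀S, hx₀⟩ := exists_max_image S (fun x => v (L.eval x)) (card_pos.mp (by omega))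
  calc v (a j) ≤ v (L.eval x₀) := hcoeff ▸
        hna.abv_coeff_le_of_abv_eval_le hk (fun x hx => (hS x hx).1) hdeg (v.nonneg _) hx₀ j
    _ < B := heval x₀ ▸ abv_sum_lt_of_isPreperiodicPt hna hk hB hd hm hak ha hf (hS x₀ hx₀S).1
        (hS x₀ hx₀S).2

end LowCoefficients

lemma Set.finite_and_ncard_le_of_forall_finset_card_le {α : Type*} {s : Set α} {m : ℕ}
    (h : ∀ t : Finset α, ↑t ⊆ s → #t ≤ m) : s.Finite ∧ s.ncard ≤ m := by
  have hfin : s.Finite := by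
    by_contra hinf
    obtain ⟨t, hts, ht⟩ := Set.Infinite.exists_subset_card_eq hinf (m + 1)
    have := h t hts
    omega
  refine ⟨hfin, ?_⟩
  rw [Set.ncard_eq_toFinset_card s hfin]
  exact h hfin.toFinset (by simp)

/-- Consequence of Lemma 5.3: with `f(y) = y^d + a_{d-2}y^{d-2} + ⋯ + a_0`, where the
`a_i` for `m < i ≤ d - 2` lie in a subfield `k` on which the nonarchimedean absolute value
is trivial, and `|a_j| > 1` for some `j ≤ m`, at most `m` elements of `k` are preperiodic
under `f`. -/
theorem stmt_11 {K : Type*} [Field K] (v : AbsoluteValue K ℝ)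
    (hna : ∀ x y : K, v (x + y) ≤ max (v x) (v y))
    (k : Subfield K) (hk : ∀ c ∈ k, c ≠ 0 → v c = 1)
    (d : ℕ) (hd : 2 ≤ d) (m : ℕ) (hm : m ≤ d - 2)
    (a : ℕ → K) (hak : ∀ i, m < i → i ≤ d - 2 → a i ∈ k)
    (hbig : ∃ j ≤ m, 1 < v (a j))
    (f : K → K) (hf : ∀ y, f y = y ^ d + ∑ i ∈ Finset.range (d - 1), a i * y ^ i) :
    {x : K | x ∈ k ∧ ∃ m' n : ℕ, 1 ≤ n ∧ f^[m' + n] x = f^[m'] x}.Finite ∧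
      {x : K | x ∈ k ∧ ∃ m' n : ℕ, 1 ≤ n ∧ f^[m' + n] x = f^[m'] x}.ncard ≤ m := by
  obtain ⟨j₀, hj₀m, hj₀⟩ := hbig
  obtain ⟨j₁, hj₁m, hmax⟩ :=
    exists_max_image (range (m + 1)) (fun j => v (a j)) nonempty_range_add_one
  have hB : 1 < v (a j₁) := hj₀.trans_le (hmax j₀ (mem_range.mpr (by omega)))
  have ha : ∀ i < d - 1, v (a i) ≤ v (a j₁) := fun i hi => by
    rcases le_or_gt i m with him | him
    · exact hmax i (mem_range.mpr (by omega))
    · exact (v.le_one_of_mem hk (hak i him (by omega))).trans hB.le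
  refine Set.finite_and_ncard_le_of_forall_finset_card_le fun S hS => ?_
  by_contra! hSm
  exact (abv_coeff_lt_of_isPreperiodicPt hna hk hB hd hm hak ha hf (fun x hx => hS hx) hSm
    (Nat.lt_succ_iff.mp (mem_range.mp hj₁m))).false
end

section
/- Let k be a field of characteristic 0, let c ∈ k, and let f : k → k be given by f(x) = x² + c. If f(f(−1/2)) = −1/2, then f(−1/2) = −1/2. In particular, there is no c ∈ k such that −1/2 is a periodic point of f of minimal period exactly 2, i.e., the portrait (0, 2) is never realized by the point −1/2 in the family z² + c. (The second 'missing portrait' observation in Section 6 of the paper.) -/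
/-- Second missing-portrait observation: for `f(x) = x² + c` over a field of
characteristic 0, if `f(f(-1/2)) = -1/2` then `f(-1/2) = -1/2`; so `-1/2` never has
minimal period exactly 2. -/
theorem stmt_15 {k : Type*} [Field k] [CharZero k] (c : k)
    (f : k → k) (hf : ∀ x, f x = x ^ 2 + c)
    (h : f (f (-(1 / 2))) = -(1 / 2)) : f (-(1 / 2)) = -(1 / 2) := by
  simp only [hf] at h ⊢
  have hsq : (c + 3 / 4) ^ 2 = 0 := by linear_combination h
  have : c = -(3 / 4) := by
    have := pow_eq_zero_iff (n := 2) (by norm_num) |>.mp hsq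
    linear_combination this
  rw [this]; ring
end

section
/- Let k be an algebraically closed field and let f ∈ k[X] be a polynomial of degree d ≥ 2 that is totally ramified at no point of k, i.e., there is no pair (α, c) ∈ k × k with f(X) = c·(X − α)^d + f(α). Then for every y ∈ k, the set {x ∈ k : f(f(x)) = y} of second preimages of y has at least 4 elements. (The polynomial analogue of the step in the proof of Proposition 4.4 of the paper asserting that an iterated backward orbit of a point contains at least four points.) -/
open Polynomial

-- finiteness of fibers
lemma fiber_finite {k : Type*} [Field k] (f : Polynomial k) (hdeg : 0 < f.natDegree)
    (c : k) : {x : k | f.eval x = c}.Finite := by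
  have hne : f - C c ≠ 0 := by
    intro h
    have : (f - C c).natDegree = f.natDegree := natDegree_sub_C
    rw [h] at this
    simp at this
    omega
  have := Polynomial.finite_setOf_isRoot hne
  convert this using 1
  ext x
  simp [IsRoot, sub_eq_zero]

lemma fiber_two {k : Type*} [Field k] [IsAlgClosed k] (d : ℕ) (hd : 2 ≤ d)
    (f : Polynomial k) (hdeg : f.natDegree = d)
    (hram : ¬ ∃ (α c : k), f = Polynomial.C c * (Polynomial.X - Polynomial.C α) ^ d
      + Polynomial.C (f.eval α)) (z : k) :
    2 ≤ {x : k | f.eval x = z}.ncard := by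
  set g := f - C z with hg
  have hgd : g.natDegree = d := by rw [hg, natDegree_sub_C, hdeg]
  have hg0 : g ≠ 0 := by intro h; rw [h] at hgd; simp at hgd; omega
  by_contra hlt
  push_neg at hlt
  rw [Nat.lt_succ_iff] at hlt
  -- there is a root
  obtain ⟨r, hr⟩ := IsAlgClosed.exists_root g (by
    intro h
    rw [degree_eq_natDegree hg0, hgd] at h
    simp at h
    omega)
  have hrS : r ∈ {x : k | f.eval x = z} := by
    simpa [hg, IsRoot, sub_eq_zero] using hr
  have hfin : {x : k | f.eval x = z}.Finite := fiber_finite f (by omega) z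
  have hsingle : {x : k | f.eval x = z} = {r} := by
    apply Set.eq_singleton_iff_unique_mem.mpr
    refine ⟨hrS, fun x hx => ?_⟩
    by_contra hxr
    have hsub : ({x, r} : Set k) ⊆ {x : k | f.eval x = z} :=
      Set.insert_subset hx (Set.singleton_subset_iff.mpr hrS)
    have h2 := Set.ncard_le_ncard hsub hfin
    rw [Set.ncard_insert_of_notMem (by simpa using hxr) (Set.finite_singleton r),
      Set.ncard_singleton] at h2
    omega
  -- roots of g all equal r
  have hroots_card : g.roots.card = d := by
    rw [← hgd]
    exact (splits_iff_card_roots.mp (IsAlgClosed.splits g))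
  have hallr : ∀ a ∈ g.roots, a = r := by
    intro a ha
    have : a ∈ {x : k | f.eval x = z} := by
      have := isRoot_of_mem_roots ha
      simpa [hg, IsRoot, sub_eq_zero] using this
    rw [hsingle] at this
    exact this
  have hrepl : g.roots = Multiset.replicate d r := by
    apply Multiset.eq_replicate.mpr
    exact ⟨hroots_card, hallr⟩
  have hfact : g = C g.leadingCoeff * (X - C r) ^ d := by
    have := (C_leadingCoeff_mul_prod_multiset_X_sub_C (p := g) (by rw [hroots_card, hgd])).symm
    rw [hrepl] at this
    simpa [Multiset.map_replicate, Multiset.prod_replicate] using this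
  apply hram
  refine ⟨r, g.leadingCoeff, ?_⟩
  have hfr : f.eval r = z := hrS
  have : f = C g.leadingCoeff * (X - C r) ^ d + C z := by
    rw [← hfact, hg]; ring
  rw [this]
  have hev : eval r (C g.leadingCoeff * (X - C r) ^ d + C z) = z := by
    simp [zero_pow (show d ≠ 0 by omega)]
  rw [hev]

/-- If `f` has degree `d ≥ 2` over an algebraically closed field and is totally ramified
at no point, then every point has at least 4 second preimages under `f`. -/
theorem stmt_17 {k : Type*} [Field k] [IsAlgClosed k] (d : ℕ) (hd : 2 ≤ d)
    (f : Polynomial k) (hdeg : f.natDegree = d)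
    (hram : ¬ ∃ (α c : k), f = Polynomial.C c * (Polynomial.X - Polynomial.C α) ^ d
      + Polynomial.C (f.eval α)) (y : k) :
    4 ≤ {x : k | f.eval (f.eval x) = y}.ncard := by
  have hP : 2 ≤ {z : k | f.eval z = y}.ncard := fiber_two d hd f hdeg hram y
  have hPfin : {z : k | f.eval z = y}.Finite := fiber_finite f (by omega) y
  obtain ⟨z1, z2, hz1, hz2, hne⟩ :=
    (Set.one_lt_ncard_iff hPfin).mp (by omega)
  set A := {x : k | f.eval x = z1} with hA
  set B := {x : k | f.eval x = z2} with hB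
  have hAfin : A.Finite := fiber_finite f (by omega) z1
  have hBfin : B.Finite := fiber_finite f (by omega) z2
  have hA2 : 2 ≤ A.ncard := fiber_two d hd f hdeg hram z1
  have hB2 : 2 ≤ B.ncard := fiber_two d hd f hdeg hram z2
  have hdisj : Disjoint A B := by
    rw [Set.disjoint_left]
    intro x hxA hxB
    exact hne (hxA.symm.trans hxB)
  have hsub : A ∪ B ⊆ {x : k | f.eval (f.eval x) = y} := by
    rintro x (hx | hx)
    · show f.eval (f.eval x) = y
      rw [hx]; exact hz1
    · show f.eval (f.eval x) = y
      rw [hx]; exact hz2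
  have hSfin : {x : k | f.eval (f.eval x) = y}.Finite := by
    have : {x : k | f.eval (f.eval x) = y} = {x : k | (f.comp f).eval x = y} := by
      ext x; simp [eval_comp]
    rw [this]
    exact fiber_finite (f.comp f) (by rw [natDegree_comp, hdeg]; nlinarith) y
  calc 4 ≤ A.ncard + B.ncard := by omega
    _ = (A ∪ B).ncard := (Set.ncard_union_eq hdisj hAfin hBfin).symm
    _ ≤ _ := Set.ncard_le_ncard hsub hSfin
end
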